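/- arXiv:1609.07103 — 7 statements merged into one kernel-verified Lean document; each statement's English description precedes it below -/
import Mathlib

section
/- Let I = {1,…,N} be a finite index set, θ ∈ ℝ a threshold, m > 0, v : I → ℝ potentials, and H : I × I → ℝ synaptic weights with H j i ≥ m for all i, j ∈ I. If the set J⁰ = {i ∈ I : v i ≥ θ} is nonempty and v i ≥ θ − m for every i ∈ I, then the fired set of the firing cascade equals all of I, i.e. J = I. -/
/-!
The cascade is complete after one step: a neuron outside `J⁰` receives at least `m` from a
single firing neuron of `J⁰`, and since all weights are nonnegative the other firing neurons
cannot take this back, so its potential `≥ θ - m` reaches `θ`.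
-/

open Finset

open scoped Classical in
/-- Cumulative union `⋃_{q ≤ p} J^q` of the firing cascade. -/
noncomputable def cumFired {N : ℕ} (θ : ℝ) (v : Fin N → ℝ) (H : Fin N → Fin N → ℝ) :
    ℕ → Finset (Fin N)
  | 0 => Finset.univ.filter (fun i => θ ≤ v i)
  | p + 1 =>
      cumFired θ v H p ∪
        Finset.univ.filter
          (fun i => i ∉ cumFired θ v H p ∧ θ ≤ v i + ∑ j ∈ cumFired θ v H p, H j i)

open scoped Classical in
/-- The set `J^p` of neurons firing at step `p` of the cascade:
`J⁰ = {i : v i ≥ θ}` and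
`J^{p+1} = {i ∉ ⋃_{q ≤ p} J^q : v i + ∑_{j ∈ ⋃_{q ≤ p} J^q} H j i ≥ θ}`. -/
noncomputable def fireStep {N : ℕ} (θ : ℝ) (v : Fin N → ℝ) (H : Fin N → Fin N → ℝ) :
    ℕ → Finset (Fin N)
  | 0 => Finset.univ.filter (fun i => θ ≤ v i)
  | p + 1 =>
      Finset.univ.filter
        (fun i => i ∉ cumFired θ v H p ∧ θ ≤ v i + ∑ j ∈ cumFired θ v H p, H j i)

/-- The fired set `J = ⋃_{p ∈ ℕ} J^p`. -/
def firedSet {N : ℕ} (θ : ℝ) (v : Fin N → ℝ) (H : Fin N → Fin N → ℝ) : Set (Fin N) :=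
  {i | ∃ p : ℕ, i ∈ fireStep θ v H p}

theorem mem_fireStep_succ {N : ℕ} {θ : ℝ} {v : Fin N → ℝ} {H : Fin N → Fin N → ℝ}
    {i : Fin N} {p : ℕ} :
    i ∈ fireStep θ v H (p + 1) ↔
      i ∉ cumFired θ v H p ∧ θ ≤ v i + ∑ j ∈ cumFired θ v H p, H j i := by
  simp [fireStep]

theorem mem_firedSet_of_le_add_sum_fireStep_zero {N : ℕ} {θ : ℝ} {v : Fin N → ℝ}
    {H : Fin N → Fin N → ℝ} {i : Fin N}
    (hi : θ ≤ v i + ∑ j ∈ fireStep θ v H 0, H j i) : i ∈ firedSet θ v H := by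
  by_cases h0 : i ∈ fireStep θ v H 0
  · exact ⟨0, h0⟩
  · exact ⟨1, mem_fireStep_succ.2 ⟨h0, hi⟩⟩

/-- If `J⁰` is nonempty and every potential is at least `θ - m`, with all synaptic
weights at least `m > 0`, then the whole network fires: `J = I`. -/
theorem full_synchronization_of_all_near_threshold {N : ℕ} (θ m : ℝ) (hm : 0 < m)
    (v : Fin N → ℝ) (H : Fin N → Fin N → ℝ)
    (hH : ∀ i j : Fin N, m ≤ H j i)
    (h0 : (fireStep θ v H 0).Nonempty)
    (hv : ∀ i : Fin N, θ - m ≤ v i) :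
    firedSet θ v H = Set.univ := by
  refine Set.eq_univ_of_forall fun i => mem_firedSet_of_le_add_sum_fireStep_zero ?_
  obtain ⟨k, hk⟩ := h0
  have hH_nonneg : ∀ j ∈ fireStep θ v H 0, 0 ≤ H j i := fun j _ => hm.le.trans (hH i j)
  calc θ ≤ v i + H k i := by linarith [hv i, hH i k]
    _ ≤ v i + ∑ j ∈ fireStep θ v H 0, H j i := by
      gcongr
      exact single_le_sum hH_nonneg hk
end

section
/- Let I = {1,…,N} be a finite index set, θ ∈ ℝ a threshold, m > 0, v : I → ℝ potentials, and H : I × I → ℝ synaptic weights with H j i ≥ m for all i, j ∈ I. Suppose there is a bijection κ : {1,…,N} → I ordering the potentials decreasingly, v(κ(1)) ≥ v(κ(2)) ≥ … ≥ v(κ(N)), such that v(κ(1)) ≥ θ and v(κ(i)) ≥ θ − (i−1)·m for every i ∈ {1,…,N}. Then the fired set of the firing cascade equals all of I, i.e. J = I. -/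
open Finset

/-! Rank the neurons by `κ`. By induction on `k`, every neuron of rank at most `k` has fired
by step `k`: the `j` neurons ranked before a neuron of rank `j ≤ k + 1` have fired by step `k`,
each contributes at least `m` to its input, and its potential is within `j * m` of `θ`. -/

section Cascade

variable {N : ℕ} {θ : ℝ} {v : Fin N → ℝ} {H : Fin N → Fin N → ℝ}

lemma cumFired_mono : Monotone (cumFired θ v H) :=
  monotone_nat_of_le_succ fun _ => subset_union_left

lemma mem_cumFired_zero {i : Fin N} (hi : θ ≤ v i) : i ∈ cumFired θ v H 0 := by
  simpa [cumFired] using hi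

lemma mem_cumFired_succ_of_le_add_sum {p : ℕ} {i : Fin N}
    (hi : θ ≤ v i + ∑ j ∈ cumFired θ v H p, H j i) : i ∈ cumFired θ v H (p + 1) := by
  by_cases hp : i ∈ cumFired θ v H p
  · exact cumFired_mono p.le_succ hp
  · simp only [cumFired, mem_union, mem_filter, mem_univ, true_and]
    exact Or.inr ⟨hp, hi⟩

lemma mem_firedSet_of_mem_cumFired {p : ℕ} {i : Fin N} (hi : i ∈ cumFired θ v H p) :
    i ∈ firedSet θ v H := by
  induction p with
  | zero => exact ⟨0, hi⟩
  | succ p ih =>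
    rcases mem_union.mp hi with hi | hi
    · exact ih hi
    · exact ⟨p + 1, hi⟩

lemma mem_cumFired_succ_of_card_le {m : ℝ} (hm : 0 ≤ m) (hH : ∀ i j, m ≤ H j i)
    {p c : ℕ} (hc : c ≤ #(cumFired θ v H p)) {i : Fin N} (hi : θ - c * m ≤ v i) :
    i ∈ cumFired θ v H (p + 1) := by
  apply mem_cumFired_succ_of_le_add_sum
  have hsum : #(cumFired θ v H p) • m ≤ ∑ j ∈ cumFired θ v H p, H j i :=
    card_nsmul_le_sum _ _ m fun j _ => hH i j
  rw [nsmul_eq_mul] at hsum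
  have hcm : (c : ℝ) * m ≤ #(cumFired θ v H p) * m := by gcongr
  linarith

lemma mem_cumFired_of_rank_le {m : ℝ} (hm : 0 ≤ m) (hH : ∀ i j, m ≤ H j i)
    (κ : Fin N ≃ Fin N) (hbound : ∀ j : Fin N, θ - (j : ℝ) * m ≤ v (κ j))
    {k : ℕ} {j : Fin N} (hj : (j : ℕ) ≤ k) : κ j ∈ cumFired θ v H k := by
  induction k generalizing j with
  | zero =>
    apply mem_cumFired_zero
    simpa [Nat.le_zero.mp hj] using hbound j
  | succ k ih =>
    have hsub : (Iio j).map κ.toEmbedding ⊆ cumFired θ v H k := by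
      intro i hi
      obtain ⟨j', hj', rfl⟩ := mem_map.mp hi
      exact ih (by have := mem_Iio.mp hj'; omega)
    have hcard : (j : ℕ) ≤ #(cumFired θ v H k) := by
      simpa using card_le_card hsub
    exact mem_cumFired_succ_of_card_le hm hH hcard (hbound j)

end Cascade

theorem full_synchronization_of_ordered_potentials_general {N : ℕ} (θ m : ℝ)
    (hm : 0 < m) (v : Fin N → ℝ) (H : Fin N → Fin N → ℝ)
    (hH : ∀ i j : Fin N, m ≤ H j i)
    (κ : Fin N ≃ Fin N)
    (hbound : ∀ i : Fin N, θ - (i : ℝ) * m ≤ v (κ i)) :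
    firedSet θ v H = Set.univ := by
  refine Set.eq_univ_of_forall fun i => ?_
  obtain ⟨j, rfl⟩ := κ.surjective i
  exact mem_firedSet_of_mem_cumFired (mem_cumFired_of_rank_le hm.le hH κ hbound le_rfl)

/-- If the potentials can be ordered decreasingly by a bijection `κ` with
`v (κ 1) ≥ θ` and `v (κ i) ≥ θ - (i - 1) m` for all `i` (1-based indexing), and all
synaptic weights are at least `m > 0`, then the whole network fires: `J = I`. -/
theorem full_synchronization_of_ordered_potentials {N : ℕ} (hN : 0 < N) (θ m : ℝ)
    (hm : 0 < m) (v : Fin N → ℝ) (H : Fin N → Fin N → ℝ)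
    (hH : ∀ i j : Fin N, m ≤ H j i)
    (κ : Fin N ≃ Fin N)
    (hdec : ∀ i j : Fin N, i ≤ j → v (κ j) ≤ v (κ i))
    (htop : θ ≤ v (κ ⟨0, hN⟩))
    (hbound : ∀ i : Fin N, θ - (i : ℝ) * m ≤ v (κ i)) :
    firedSet θ v H = Set.univ :=
  full_synchronization_of_ordered_potentials_general θ m hm v H hH κ hbound
end

section
/- Let γ > 0 and V_r < θ < β be real numbers, v(t) = (V_r − β)e^{−γt} + β, δ ∈ (0, min(β − θ, θ − V_r)), and let t1 = (1/γ)·log((β − V_r)/(β − θ + δ)) and t2 = (1/γ)·log((β − V_r)/(β − θ − δ)). Let f : [0, t2] → ℝ be continuous with |f(t) − v(t)| < δ for all t ∈ [0, t2]. Then the set {t ∈ [0, t2] : f(t) ≥ θ} is nonempty, its infimum τ satisfies t1 < τ ≤ t2, and f(t) > θ − 2δ for every t ∈ [t1, t2]. -/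
/-!
The deterministic potential `v` is increasing and crosses the levels `θ - δ` and `θ + δ`
exactly at `t₁` and `t₂`. A path staying within `δ` of `v` is therefore below `θ` up to `t₁`,
above `θ` at `t₂`, and above `v(t₁) - δ = θ - 2δ` on `[t₁, t₂]`. The first hitting time of `θ`
is attained because the hitting set is closed, so it lies in `(t₁, t₂]`.
-/

open Real Set

noncomputable def lifPotential (γ Vr β t : ℝ) : ℝ :=
  (Vr - β) * exp (-γ * t) + β

lemma lifPotential_zero (γ Vr β : ℝ) : lifPotential γ Vr β 0 = Vr := by
  simp [lifPotential]

lemma monotone_lifPotential {γ Vr β : ℝ} (hγ : 0 ≤ γ) (hVβ : Vr ≤ β) :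
    Monotone (lifPotential γ Vr β) := by
  have hexp : Antitone fun t : ℝ => exp (-γ * t) := fun s t hst =>
    exp_le_exp.mpr (by nlinarith)
  exact (hexp.const_mul_of_nonpos (sub_nonpos.mpr hVβ)).add_const β

lemma lifPotential_hittingTime {γ Vr β c : ℝ} (hγ : γ ≠ 0) (hVβ : Vr < β) (hc : 0 < c) :
    lifPotential γ Vr β ((1 / γ) * log ((β - Vr) / c)) = β - c := by
  have hV : β - Vr ≠ 0 := by linarith
  have hexp : exp (-γ * ((1 / γ) * log ((β - Vr) / c))) = c / (β - Vr) := by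
    rw [show -γ * ((1 / γ) * log ((β - Vr) / c)) = -log ((β - Vr) / c) by field_simp,
      exp_neg, exp_log (div_pos (by linarith) hc), inv_div]
  rw [lifPotential, hexp]
  field_simp
  ring

section Tube

variable {f v : ℝ → ℝ} {θ δ a t : ℝ}

lemma lt_of_abs_sub_lt_of_le_apply (hv : Monotone v) (hva : v a = θ - δ)
    (hfv : |f t - v t| < δ) (hθ : θ ≤ f t) : a < t := by
  by_contra! hta
  have := hv hta
  linarith [(abs_sub_lt_iff.mp hfv).1]

lemma sub_two_mul_lt_of_abs_sub_lt (hv : Monotone v) (hva : v a = θ - δ) (hat : a ≤ t)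
    (hfv : |f t - v t| < δ) : θ - 2 * δ < f t := by
  have := hv hat
  linarith [(abs_sub_lt_iff.mp hfv).2]

lemma le_of_abs_sub_lt (hvt : v t = θ + δ) (hfv : |f t - v t| < δ) : θ ≤ f t := by
  linarith [(abs_sub_lt_iff.mp hfv).2]

end Tube

lemma sInf_mem_of_continuousOn_Icc {f : ℝ → ℝ} {θ a b : ℝ} (hf : ContinuousOn f (Icc a b))
    (hne : {t ∈ Icc a b | θ ≤ f t}.Nonempty) :
    sInf {t ∈ Icc a b | θ ≤ f t} ∈ {t ∈ Icc a b | θ ≤ f t} :=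
  (hf.preimage_isClosed_of_isClosed isClosed_Icc isClosed_Ici).csInf_mem hne
    ⟨a, fun _ ht => ht.1.1⟩

theorem hitting_time_in_tube_general (γ Vr θ β δ : ℝ) (hγ : 0 < γ)
    (hδ : 0 < δ) (hδ' : δ < min (β - θ) (θ - Vr))
    (t1 t2 : ℝ)
    (ht1 : t1 = (1 / γ) * Real.log ((β - Vr) / (β - θ + δ)))
    (ht2 : t2 = (1 / γ) * Real.log ((β - Vr) / (β - θ - δ)))
    (f : ℝ → ℝ) (hf : ContinuousOn f (Set.Icc 0 t2))
    (htube : ∀ t ∈ Set.Icc 0 t2, |f t - ((Vr - β) * Real.exp (-γ * t) + β)| < δ) :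
    {t ∈ Set.Icc 0 t2 | θ ≤ f t}.Nonempty ∧
    t1 < sInf {t ∈ Set.Icc 0 t2 | θ ≤ f t} ∧
    sInf {t ∈ Set.Icc 0 t2 | θ ≤ f t} ≤ t2 ∧
    ∀ t ∈ Set.Icc t1 t2, θ - 2 * δ < f t := by
  have hδβ : δ < β - θ := hδ'.trans_le (min_le_left _ _)
  have hδVr : δ < θ - Vr := hδ'.trans_le (min_le_right _ _)
  have hv : Monotone (lifPotential γ Vr β) := monotone_lifPotential hγ.le (by linarith)
  have hv1 : lifPotential γ Vr β t1 = θ - δ := by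
    rw [ht1, lifPotential_hittingTime hγ.ne' (by linarith) (by linarith)]; ring
  have hv2 : lifPotential γ Vr β t2 = θ + δ := by
    rw [ht2, lifPotential_hittingTime hγ.ne' (by linarith) (by linarith)]; ring
  have ht1_pos : 0 < t1 :=
    hv.reflect_lt (by rw [lifPotential_zero, hv1]; linarith)
  have ht12 : t1 < t2 := hv.reflect_lt (by rw [hv1, hv2]; linarith)
  have ht2_mem : t2 ∈ Icc 0 t2 := ⟨by linarith, le_rfl⟩
  have hne : {t ∈ Icc 0 t2 | θ ≤ f t}.Nonempty :=
    ⟨t2, ht2_mem, le_of_abs_sub_lt hv2 (htube t2 ht2_mem)⟩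
  obtain ⟨hτ_mem, hτ⟩ := sInf_mem_of_continuousOn_Icc hf hne
  refine ⟨hne, lt_of_abs_sub_lt_of_le_apply hv hv1 (htube _ hτ_mem) hτ, hτ_mem.2,
    fun t ht => ?_⟩
  exact sub_two_mul_lt_of_abs_sub_lt hv hv1 ht.1 (htube t ⟨by linarith [ht.1], ht.2⟩)

/-- If `f` is continuous on `[0, t₂]` and stays within `δ` of the deterministic LIF
solution `v(t) = (V_r - β) e^{-γ t} + β`, then `f` reaches the threshold `θ` in `[0, t₂]`,
the first time `τ` it does so satisfies `t₁ < τ ≤ t₂`, and `f(t) > θ - 2δ` for every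
`t ∈ [t₁, t₂]`. -/
theorem hitting_time_in_tube (γ Vr θ β δ : ℝ) (hγ : 0 < γ) (h1 : Vr < θ) (h2 : θ < β)
    (hδ : 0 < δ) (hδ' : δ < min (β - θ) (θ - Vr))
    (t1 t2 : ℝ)
    (ht1 : t1 = (1 / γ) * Real.log ((β - Vr) / (β - θ + δ)))
    (ht2 : t2 = (1 / γ) * Real.log ((β - Vr) / (β - θ - δ)))
    (f : ℝ → ℝ) (hf : ContinuousOn f (Set.Icc 0 t2))
    (htube : ∀ t ∈ Set.Icc 0 t2, |f t - ((Vr - β) * Real.exp (-γ * t) + β)| < δ) :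
    {t ∈ Set.Icc 0 t2 | θ ≤ f t}.Nonempty ∧
    t1 < sInf {t ∈ Set.Icc 0 t2 | θ ≤ f t} ∧
    sInf {t ∈ Set.Icc 0 t2 | θ ≤ f t} ≤ t2 ∧
    ∀ t ∈ Set.Icc t1 t2, θ - 2 * δ < f t :=
  hitting_time_in_tube_general γ Vr θ β δ hγ hδ hδ' t1 t2 ht1 ht2 f hf htube
end

section
/- Let γ > 0 and V_r < θ < β be real numbers, v(t) = (V_r − β)e^{−γt} + β, m > 0 with m/2 < min(β − θ, θ − V_r), and set δ = m/2, t2 = (1/γ)·log((β − V_r)/(β − θ − δ)). Let I = {1,…,N} and for each i ∈ I let f_i : [0, t2] → ℝ be continuous with |f_i(t) − v(t)| < δ for all t ∈ [0, t2]. Let τ = min over i ∈ I of inf{t ∈ [0, t2] : f_i(t) ≥ θ}. Then for any synaptic weights H : I × I → ℝ with H j i ≥ m for all i, j, the firing cascade applied to the potentials (f_i(τ))_{i∈I} fires all neurons: J = I. -/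
open Finset

/-- If `N` neurons have continuous potential trajectories staying within `δ = m/2` of the
deterministic solution `v(t) = (V_r - β) e^{-γ t} + β` on `[0, t₂]`, then at the first
time `τ` at which one of the trajectories reaches the threshold `θ`, the firing cascade
applied to the potentials `(f_i(τ))_i` fires all neurons: `J = I`. -/
theorem full_synchronization_at_first_hitting_time {N : ℕ} (hN : 0 < N)
    (γ Vr θ β m : ℝ) (hγ : 0 < γ) (h1 : Vr < θ) (h2 : θ < β) (hm : 0 < m)
    (hδ : m / 2 < min (β - θ) (θ - Vr))
    (t2 : ℝ) (ht2 : t2 = (1 / γ) * Real.log ((β - Vr) / (β - θ - m / 2)))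
    (f : Fin N → ℝ → ℝ)
    (hf : ∀ i : Fin N, ContinuousOn (f i) (Set.Icc 0 t2))
    (htube : ∀ i : Fin N, ∀ t ∈ Set.Icc 0 t2,
      |f i t - ((Vr - β) * Real.exp (-γ * t) + β)| < m / 2)
    (τ : ℝ) (hτ : τ = ⨅ i : Fin N, sInf {t ∈ Set.Icc 0 t2 | θ ≤ f i t})
    (H : Fin N → Fin N → ℝ) (hH : ∀ i j : Fin N, m ≤ H j i) :
    firedSet θ (fun i => f i τ) H = Set.univ := by
  classical
  haveI : Nonempty (Fin N) := Fin.pos_iff_nonempty.mp hN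
  have hδ1 : m / 2 < β - θ := lt_of_lt_of_le hδ (min_le_left _ _)
  have hδ2 : m / 2 < θ - Vr := lt_of_lt_of_le hδ (min_le_right _ _)
  have hβθδ : 0 < β - θ - m / 2 := by linarith
  have hβVr : 0 < β - Vr := by linarith
  have hratio : 1 ≤ (β - Vr) / (β - θ - m / 2) := by
    rw [le_div_iff₀ hβθδ]; linarith
  have ht2nonneg : 0 ≤ t2 := by
    rw [ht2]
    exact mul_nonneg (by positivity) (Real.log_nonneg hratio)
  set vfun : ℝ → ℝ := fun t => (Vr - β) * Real.exp (-γ * t) + β with hvfun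
  have hvt2 : vfun t2 = θ + m / 2 := by
    have hexp : Real.exp (-γ * t2) = (β - θ - m / 2) / (β - Vr) := by
      rw [ht2]
      have : -γ * (1 / γ * Real.log ((β - Vr) / (β - θ - m / 2)))
          = -Real.log ((β - Vr) / (β - θ - m / 2)) := by
        field_simp
      rw [this, Real.exp_neg, Real.exp_log (by positivity), inv_div]
    simp only [hvfun, hexp]
    field_simp
    ring
  set S : Fin N → Set ℝ := fun i => {t ∈ Set.Icc 0 t2 | θ ≤ f i t} with hS
  have hmemS : ∀ i, t2 ∈ S i := by
    intro i
    have ht := htube i t2 (Set.right_mem_Icc.mpr ht2nonneg)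
    rw [abs_lt] at ht
    refine ⟨Set.right_mem_Icc.mpr ht2nonneg, ?_⟩
    have := ht.1
    rw [show ((Vr - β) * Real.exp (-γ * t2) + β) = vfun t2 from rfl, hvt2] at this
    linarith
  have hScompact : ∀ i, IsCompact (S i) := by
    intro i
    have hc : Continuous ((Set.Icc 0 t2).restrict (f i)) :=
      continuousOn_iff_continuous_restrict.mp (hf i)
    have hclosed : IsClosed {x : Set.Icc 0 t2 | θ ≤ (Set.Icc 0 t2).restrict (f i) x} :=
      isClosed_le continuous_const hc
    have hcpt : IsCompact {x : Set.Icc 0 t2 | θ ≤ (Set.Icc 0 t2).restrict (f i) x} :=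
      hclosed.isCompact
    have himg : S i = Subtype.val '' {x : Set.Icc 0 t2 | θ ≤ (Set.Icc 0 t2).restrict (f i) x} := by
      ext t
      constructor
      · rintro ⟨ht1, ht2'⟩
        exact ⟨⟨t, ht1⟩, ht2', rfl⟩
      · rintro ⟨⟨t', ht'⟩, hle, rfl⟩
        exact ⟨ht', hle⟩
    rw [himg]
    exact hcpt.image continuous_subtype_val
  set T : Fin N → ℝ := fun i => sInf (S i) with hT
  have hTmem : ∀ i, T i ∈ S i := fun i =>
    (hScompact i).sInf_mem ⟨t2, hmemS i⟩
  obtain ⟨i₀, hi₀⟩ := Finite.exists_min T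
  have hτeq : τ = T i₀ := by
    rw [hτ]
    exact le_antisymm (ciInf_le (Finite.bddBelow_range T) i₀) (le_ciInf hi₀)
  have hτIcc : τ ∈ Set.Icc 0 t2 := hτeq ▸ (hTmem i₀).1
  have hfi₀ : θ ≤ f i₀ τ := hτeq ▸ (hTmem i₀).2
  have hvτ : θ - m / 2 < vfun τ := by
    have := htube i₀ τ hτIcc
    rw [abs_lt] at this
    have h := this.2
    simp only [hvfun] at *
    linarith
  have hall : ∀ i, θ - m < f i τ := by
    intro i
    have := htube i τ hτIcc
    rw [abs_lt] at this
    have h := this.1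
    simp only [hvfun] at *
    linarith
  ext i
  simp only [firedSet, Set.mem_setOf_eq, Set.mem_univ, iff_true]
  by_cases hi : θ ≤ f i τ
  · exact ⟨0, by simp [fireStep, hi]⟩
  · refine ⟨1, ?_⟩
    have hcum0 : cumFired θ (fun i => f i τ) H 0
        = Finset.univ.filter (fun j => θ ≤ f j τ) := by
      simp [cumFired]
    have hnotin : i ∉ cumFired θ (fun i => f i τ) H 0 := by
      rw [hcum0]; simp [hi]
    have hi₀mem : i₀ ∈ cumFired θ (fun i => f i τ) H 0 := by
      rw [hcum0]; simp [hfi₀]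
    have hsum : m ≤ ∑ j ∈ cumFired θ (fun i => f i τ) H 0, H j i := by
      calc m ≤ H i₀ i := hH i i₀
        _ ≤ ∑ j ∈ cumFired θ (fun i => f i τ) H 0, H j i :=
          Finset.single_le_sum (fun j _ => le_trans hm.le (hH i j)) hi₀mem
    have hfin : θ ≤ f i τ + ∑ j ∈ cumFired θ (fun i => f i τ) H 0, H j i := by
      have := hall i
      linarith
    simp only [fireStep, Finset.mem_filter, Finset.mem_univ, true_and]
    exact ⟨hnotin, hfin⟩
end

section
/- Let γ > 0, T1 > 0, δ > 0. For every absolutely continuous φ : [0, T1] → ℝ with φ′ ∈ L²([0, T1]), φ(0) = 0 and |φ(T1)| = δ, one has ∫₀^{T1} (φ′(t) + γ·φ(t))² dt ≥ γδ²·(1 + cosh(γT1)/sinh(γT1)), and equality holds for φ(t) = δ·sinh(γt)/sinh(γT1). -/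
open MeasureTheory

/-- Cauchy–Schwarz for interval integrals. -/
lemma my_interval_cauchy_schwarz {f g : ℝ → ℝ} {a b : ℝ} (hab : a ≤ b)
    (hf2 : IntervalIntegrable (fun t => f t ^ 2) volume a b)
    (hg2 : IntervalIntegrable (fun t => g t ^ 2) volume a b)
    (hfg : IntervalIntegrable (fun t => f t * g t) volume a b) :
    (∫ t in a..b, f t * g t) ^ 2 ≤ (∫ t in a..b, f t ^ 2) * ∫ t in a..b, g t ^ 2 := by
  set A := ∫ t in a..b, g t ^ 2 with hA
  set B := ∫ t in a..b, f t * g t with hB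
  set C := ∫ t in a..b, f t ^ 2 with hC
  have key : ∀ x : ℝ, 0 ≤ A * (x * x) + (2 * B) * x + C := by
    intro x
    have h0 : 0 ≤ ∫ t in a..b, (f t + x * g t) ^ 2 :=
      intervalIntegral.integral_nonneg hab (fun t _ => sq_nonneg _)
    have hexp : (fun t => (f t + x * g t) ^ 2)
        = fun t => x ^ 2 * g t ^ 2 + ((2 * x) * (f t * g t) + f t ^ 2) := by
      funext t; ring
    rw [hexp, intervalIntegral.integral_add (hg2.const_mul _) ((hfg.const_mul _).add hf2),
      intervalIntegral.integral_add (hfg.const_mul _) hf2,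
      intervalIntegral.integral_const_mul, intervalIntegral.integral_const_mul] at h0
    nlinarith [h0]
  have hd := discrim_le_zero key
  rw [discrim] at hd
  nlinarith [hd]

/-- `∫₀^T exp(γt)² = (exp(γT)² - 1)/(2γ)`. -/
lemma my_exp_sq_integral (γ : ℝ) (hγ : 0 < γ) (T : ℝ) :
    ∫ t in (0:ℝ)..T, Real.exp (γ * t) ^ 2 = (Real.exp (γ * T) ^ 2 - 1) / (2 * γ) := by
  have hder : ∀ t ∈ Set.uIcc (0:ℝ) T,
      HasDerivAt (fun t => Real.exp (γ * t) ^ 2 / (2 * γ)) (Real.exp (γ * t) ^ 2) t := by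
    intro t _
    have h1 : HasDerivAt (fun t : ℝ => γ * t) γ t := by
      simpa using (hasDerivAt_id t).const_mul γ
    have h2 := h1.exp
    have h3 := (h2.fun_pow 2).div_const (2 * γ)
    refine h3.congr_deriv ?_
    field_simp
    ring
  have hint : IntervalIntegrable (fun t => Real.exp (γ * t) ^ 2) volume 0 T :=
    (Continuous.intervalIntegrable (by continuity)) _ _
  have := intervalIntegral.integral_eq_sub_of_hasDerivAt hder hint
  rw [this]
  rw [mul_zero, Real.exp_zero]
  ring

/-- For every absolutely continuous `φ` on `[0, T₁]` with square-integrable derivative,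
`φ(0) = 0` and `|φ(T₁)| = δ`, the action satisfies
`∫₀^{T₁} (φ' + γ φ)² ≥ γ δ² (1 + cosh(γ T₁)/sinh(γ T₁))`, with equality for
`φ(t) = δ sinh(γ t)/sinh(γ T₁)`. -/
theorem action_lower_bound_and_equality (γ T1 δ : ℝ) (hγ : 0 < γ) (hT1 : 0 < T1)
    (hδ : 0 < δ) :
    (∀ φ φd : ℝ → ℝ,
      (∀ t ∈ Set.Icc (0 : ℝ) T1, HasDerivAt φ (φd t) t) →
      IntervalIntegrable (fun t => (φd t) ^ 2) volume 0 T1 →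
      IntervalIntegrable φd volume 0 T1 →
      φ 0 = 0 → |φ T1| = δ →
      γ * δ ^ 2 * (1 + Real.cosh (γ * T1) / Real.sinh (γ * T1)) ≤
        ∫ t in (0 : ℝ)..T1, (φd t + γ * φ t) ^ 2) ∧
    (∫ t in (0 : ℝ)..T1,
        (δ * γ * Real.cosh (γ * t) / Real.sinh (γ * T1) +
          γ * (δ * Real.sinh (γ * t) / Real.sinh (γ * T1))) ^ 2) =
      γ * δ ^ 2 * (1 + Real.cosh (γ * T1) / Real.sinh (γ * T1)) := by
  have hx : 0 < γ * T1 := mul_pos hγ hT1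
  have hs : 0 < Real.sinh (γ * T1) := Real.sinh_pos_iff.mpr hx
  have hE1 : 1 < Real.exp (γ * T1) := by
    have := Real.exp_lt_exp.mpr hx
    simpa using this
  set E := Real.exp (γ * T1) with hEdef
  have hEcs : E = Real.cosh (γ * T1) + Real.sinh (γ * T1) := (Real.cosh_add_sinh _).symm
  have hkey : E ^ 2 - 1 = 2 * Real.sinh (γ * T1) * E := by
    have h1 := Real.cosh_sq_sub_sinh_sq (γ * T1)
    nlinarith [hEcs, h1]
  have huIcc : Set.uIcc (0:ℝ) T1 = Set.Icc 0 T1 := Set.uIcc_of_le hT1.le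
  constructor
  · intro φ φd hderiv hsq hint h0 hT
    have hφc : ContinuousOn φ (Set.Icc 0 T1) := fun t ht =>
      (hderiv t ht).continuousAt.continuousWithinAt
    set f : ℝ → ℝ := fun t => φd t + γ * φ t with hf
    have hφint : IntervalIntegrable (fun t => γ * φ t) volume 0 T1 := by
      apply ContinuousOn.intervalIntegrable
      rw [huIcc]
      exact continuousOn_const.mul hφc
    have hfint : IntervalIntegrable f volume 0 T1 := hint.add hφint
    have hf2 : IntervalIntegrable (fun t => f t ^ 2) volume 0 T1 := by
      have hmix : IntervalIntegrable (fun t => φd t * φ t) volume 0 T1 := by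
        apply hint.mul_continuousOn
        rw [huIcc]; exact hφc
      have hφ2 : IntervalIntegrable (fun t => γ ^ 2 * φ t ^ 2) volume 0 T1 := by
        apply ContinuousOn.intervalIntegrable
        rw [huIcc]
        exact continuousOn_const.mul (hφc.pow 2)
      have hexp : (fun t => f t ^ 2)
          = fun t => φd t ^ 2 + ((2 * γ) * (φd t * φ t) + γ ^ 2 * φ t ^ 2) := by
        funext t; simp only [hf]; ring
      rw [hexp]
      exact hsq.add ((hmix.const_mul _).add hφ2)
    set g : ℝ → ℝ := fun t => Real.exp (γ * t) with hg
    have hg2 : IntervalIntegrable (fun t => g t ^ 2) volume 0 T1 :=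
      (Continuous.intervalIntegrable (by continuity)) _ _
    have hgf : IntervalIntegrable (fun t => g t * f t) volume 0 T1 := by
      apply hfint.continuousOn_mul
      exact Real.continuous_exp.comp (continuous_const.mul continuous_id) |>.continuousOn
    -- FTC for ψ = exp(γt) φ(t)
    have hderψ : ∀ t ∈ Set.uIcc (0:ℝ) T1,
        HasDerivAt (fun t => Real.exp (γ * t) * φ t) (g t * f t) t := by
      intro t ht
      rw [huIcc] at ht
      have h1 : HasDerivAt (fun t : ℝ => γ * t) γ t := by
        simpa using (hasDerivAt_id t).const_mul γ
      have h2 := (h1.exp).mul (hderiv t ht)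
      refine h2.congr_deriv ?_
      simp only [hg, hf]
      ring
    have hFTC := intervalIntegral.integral_eq_sub_of_hasDerivAt hderψ hgf
    have hB2 : (∫ t in (0:ℝ)..T1, g t * f t) ^ 2 = E ^ 2 * δ ^ 2 := by
      rw [hFTC, mul_zero, Real.exp_zero, h0, mul_zero, sub_zero, mul_pow, ← sq_abs (φ T1), hT]
    have hcs := my_interval_cauchy_schwarz hT1.le hg2 hf2
      (by simpa [mul_comm] using hgf) |>.trans_eq (mul_comm _ _)
    -- hcs : (∫ g*f)^2 ≤ (∫ f^2) * (∫ g^2)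
    have hgval : (∫ t in (0:ℝ)..T1, g t ^ 2) = (E ^ 2 - 1) / (2 * γ) :=
      my_exp_sq_integral γ hγ T1
    rw [hgval, hB2] at hcs
    have hI : 0 ≤ ∫ t in (0:ℝ)..T1, f t ^ 2 :=
      intervalIntegral.integral_nonneg hT1.le (fun t _ => sq_nonneg _)
    have hEpos : 0 < E := lt_trans one_pos hE1
    have hgoal : γ * δ ^ 2 * (1 + Real.cosh (γ * T1) / Real.sinh (γ * T1))
        * ((E ^ 2 - 1) / (2 * γ)) = E ^ 2 * δ ^ 2 := by
      rw [hkey]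
      field_simp
      nlinarith [hEcs, hs]
    have hpos : 0 < (E ^ 2 - 1) / (2 * γ) := by
      apply div_pos (by nlinarith) (by linarith)
    have : γ * δ ^ 2 * (1 + Real.cosh (γ * T1) / Real.sinh (γ * T1))
        ≤ ∫ t in (0:ℝ)..T1, f t ^ 2 := by
      rw [← mul_le_mul_iff_of_pos_right hpos, hgoal]
      calc E ^ 2 * δ ^ 2 ≤ (∫ t in (0:ℝ)..T1, f t ^ 2) * ((E ^ 2 - 1) / (2 * γ)) := hcs
        _ = _ := rfl
    simpa [hf] using this
  · have hfun : (fun t => (δ * γ * Real.cosh (γ * t) / Real.sinh (γ * T1) +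
          γ * (δ * Real.sinh (γ * t) / Real.sinh (γ * T1))) ^ 2)
        = fun t => (δ * γ / Real.sinh (γ * T1)) ^ 2 * Real.exp (γ * t) ^ 2 := by
      funext t
      have h := Real.cosh_add_sinh (γ * t)
      field_simp
      linear_combination
        (Real.exp (γ * t) + Real.cosh (γ * t) + Real.sinh (γ * t)) * h
    rw [hfun, intervalIntegral.integral_const_mul, my_exp_sq_integral γ hγ T1, hkey]
    field_simp
    nlinarith [hEcs, hs]
end

section
/- Let γ > 0, K ∈ ℝ, x0 ∈ ℝ, T > 0, δ > 0, and let x(t) = (x0 − K/γ)·e^{−γt} + K/γ be the solution of x′ = K − γx with x(0) = x0. Then every absolutely continuous f : [0, T] → ℝ with f′ ∈ L²([0, T]), f(0) = x0 and sup_{t ∈ [0,T]} |f(t) − x(t)| ≥ δ satisfies (1/2)·∫₀^T (f′(t) − (K − γ·f(t)))² dt ≥ (γδ²/2)·(1 + cosh(γT)/sinh(γT)). -/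
open MeasureTheory

set_option maxHeartbeats 1000000

/-- Freidlin–Wentzell lower bound: every absolutely continuous path `f` on `[0, T]` with
square-integrable derivative, starting at `x₀` and deviating by at least `δ` (in sup
norm) from the deterministic solution `x(t) = (x₀ - K/γ) e^{-γ t} + K/γ` of
`x' = K - γ x`, has action
`(1/2) ∫₀ᵀ (f' - (K - γ f))² ≥ (γ δ²/2)(1 + cosh(γ T)/sinh(γ T))`. -/
theorem action_lower_bound_for_deviating_paths (γ K x0 T δ : ℝ)
    (hγ : 0 < γ) (hT : 0 < T) (hδ : 0 < δ)
    (f fd : ℝ → ℝ)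
    (hderiv : ∀ t ∈ Set.Icc (0 : ℝ) T, HasDerivAt f (fd t) t)
    (hL2 : IntervalIntegrable (fun t => (fd t) ^ 2) volume 0 T)
    (hL1 : IntervalIntegrable fd volume 0 T)
    (hf0 : f 0 = x0)
    (hdev : ∃ t ∈ Set.Icc (0 : ℝ) T,
      δ ≤ |f t - ((x0 - K / γ) * Real.exp (-γ * t) + K / γ)|) :
    γ * δ ^ 2 / 2 * (1 + Real.cosh (γ * T) / Real.sinh (γ * T)) ≤
      (1 / 2) * ∫ t in (0 : ℝ)..T, (fd t - (K - γ * f t)) ^ 2 := by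
  obtain ⟨s, ⟨hs0, hsT⟩, hsdev⟩ := hdev
  set x : ℝ → ℝ := fun t => (x0 - K / γ) * Real.exp (-γ * t) + K / γ with hxdef
  set φ : ℝ → ℝ := fun t => fd t - (K - γ * f t) with hφdef
  -- continuity of f
  have hfc : ContinuousOn f (Set.Icc 0 T) := fun t ht =>
    ((hderiv t ht).continuousAt).continuousWithinAt
  have huIcc : Set.uIcc (0:ℝ) T = Set.Icc 0 T := Set.uIcc_of_le hT.le
  have huIccs : Set.uIcc (0:ℝ) s = Set.Icc 0 s := Set.uIcc_of_le hs0
  have hsub : Set.uIcc (0:ℝ) s ⊆ Set.uIcc (0:ℝ) T := by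
    rw [huIcc, huIccs]; exact Set.Icc_subset_Icc le_rfl hsT
  -- s > 0
  have hx00 : x 0 = x0 := by simp [hxdef]
  have hspos : 0 < s := by
    rcases lt_or_eq_of_le hs0 with h | h
    · exact h
    · exfalso
      rw [← h, hf0] at hsdev
      have hxx : (x0 - K / γ) * Real.exp (-γ * 0) + K / γ = x0 := by simp
      rw [hxx] at hsdev
      simp at hsdev
      linarith
  -- integrability of φ and φ² on [0,T]
  have hcK : ContinuousOn (fun t => K - γ * f t) (Set.uIcc (0:ℝ) T) := by
    rw [huIcc]; exact continuousOn_const.sub (continuousOn_const.mul hfc)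
  have hφint : IntervalIntegrable φ volume 0 T := by
    have h2 : IntervalIntegrable (fun t => K - γ * f t) volume 0 T :=
      hcK.intervalIntegrable
    exact hL1.sub h2
  have hφsq : IntervalIntegrable (fun t => φ t ^ 2) volume 0 T := by
    have h2 : IntervalIntegrable (fun t => (-2 * (K - γ * f t)) * fd t) volume 0 T :=
      hL1.continuousOn_mul ((continuousOn_const.mul hcK))
    have h3 : IntervalIntegrable (fun t => (K - γ * f t) ^ 2) volume 0 T :=
      (hcK.pow 2).intervalIntegrable
    have heq : (fun t => φ t ^ 2) =
        fun t => fd t ^ 2 + (-2 * (K - γ * f t)) * fd t + (K - γ * f t) ^ 2 := by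
      funext t; simp only [hφdef]; ring
    rw [heq]
    exact (hL2.add h2).add h3
  -- restricted integrability on [0,s]
  have hφints : IntervalIntegrable φ volume 0 s := hφint.mono_set hsub
  have hφsqs : IntervalIntegrable (fun t => φ t ^ 2) volume 0 s := hφsq.mono_set hsub
  have hec : ContinuousOn (fun t => Real.exp (γ * t)) (Set.uIcc (0:ℝ) s) :=
    (Real.continuous_exp.comp (continuous_const.mul continuous_id)).continuousOn
  have hψints : IntervalIntegrable (fun t => Real.exp (γ * t) * φ t) volume 0 s :=
    hφints.continuousOn_mul hec
  have he2ints : IntervalIntegrable (fun t => Real.exp (2 * γ * t)) volume 0 s :=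
    ((Real.continuous_exp.comp (continuous_const.mul continuous_id)).continuousOn).intervalIntegrable
  -- FTC: ∫₀ˢ e^{γt} φ t dt = e^{γs} (f s - x s)
  have hFTC1 : ∫ t in (0:ℝ)..s, Real.exp (γ * t) * φ t
      = Real.exp (γ * s) * (f s - x s) := by
    have hD : ∀ t ∈ Set.uIcc (0:ℝ) s,
        HasDerivAt (fun u => Real.exp (γ * u) * (f u - x u)) (Real.exp (γ * t) * φ t) t := by
      intro t ht
      have htT : t ∈ Set.Icc (0:ℝ) T := by
        have := hsub ht; rwa [huIcc] at this
      have he : HasDerivAt (fun u => Real.exp (γ * u)) (γ * Real.exp (γ * t)) t := by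
        have h1 : HasDerivAt (fun u : ℝ => γ * u) γ t := by
          simpa using (hasDerivAt_id t).const_mul γ
        simpa [mul_comm] using h1.exp
      have hx' : HasDerivAt x ((x0 - K / γ) * (Real.exp (-γ * t) * (-γ))) t := by
        have h1 : HasDerivAt (fun u : ℝ => -γ * u) (-γ) t := by
          simpa using (hasDerivAt_id t).const_mul (-γ)
        have h2 := h1.exp
        simpa [hxdef, mul_comm] using (h2.const_mul (x0 - K / γ)).add_const (K / γ)
      have hfd := hderiv t htT
      have := he.mul (hfd.sub hx')
      refine this.congr_deriv ?_
      simp only [hφdef, hxdef, Pi.sub_apply]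
      field_simp
      ring
    rw [intervalIntegral.integral_eq_sub_of_hasDerivAt hD hψints]
    simp [hf0, hx00]
  -- FTC: ∫₀ˢ e^{2γt} dt = (e^{2γs} - 1)/(2γ)
  have hFTC2 : ∫ t in (0:ℝ)..s, Real.exp (2 * γ * t)
      = (Real.exp (2 * γ * s) - 1) / (2 * γ) := by
    have hD : ∀ t ∈ Set.uIcc (0:ℝ) s,
        HasDerivAt (fun u => Real.exp (2 * γ * u) / (2 * γ)) (Real.exp (2 * γ * t)) t := by
      intro t _
      have h1 : HasDerivAt (fun u : ℝ => 2 * γ * u) (2 * γ) t := by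
        simpa using (hasDerivAt_id t).const_mul (2 * γ)
      have h2 := h1.exp
      have h3 := h2.div_const (2 * γ)
      refine h3.congr_deriv ?_
      field_simp
    rw [intervalIntegral.integral_eq_sub_of_hasDerivAt hD he2ints]
    rw [mul_zero, Real.exp_zero]
    ring
  -- abbreviations
  set A : ℝ := Real.exp (γ * s) * (f s - x s) with hA
  set B : ℝ := (Real.exp (2 * γ * s) - 1) / (2 * γ) with hB
  have hEs : 1 < Real.exp (2 * γ * s) := by
    have h := Real.add_one_le_exp (2 * γ * s)
    nlinarith [mul_pos (mul_pos two_pos hγ) hspos]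
  have hBpos : 0 < B := by
    rw [hB]; exact div_pos (by linarith) (by positivity)
  set lam : ℝ := A / B with hlam
  -- key pointwise inequality integrated
  have hkey : 0 ≤ ∫ t in (0:ℝ)..s, (φ t - lam * Real.exp (γ * t)) ^ 2 :=
    intervalIntegral.integral_nonneg hs0 (fun t _ => sq_nonneg _)
  have hexpand : ∫ t in (0:ℝ)..s, (φ t - lam * Real.exp (γ * t)) ^ 2
      = (∫ t in (0:ℝ)..s, φ t ^ 2) - 2 * lam * A + lam ^ 2 * B := by
    have heq : (fun t => (φ t - lam * Real.exp (γ * t)) ^ 2)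
        = fun t => (φ t ^ 2 - (2 * lam) * (Real.exp (γ * t) * φ t))
            + lam ^ 2 * Real.exp (2 * γ * t) := by
      funext t
      have h : Real.exp (2 * γ * t) = Real.exp (γ * t) * Real.exp (γ * t) := by
        rw [← Real.exp_add]; ring_nf
      rw [h]; ring
    rw [heq, intervalIntegral.integral_add (hφsqs.sub (hψints.const_mul _))
          (he2ints.const_mul _),
        intervalIntegral.integral_sub hφsqs (hψints.const_mul _),
        intervalIntegral.integral_const_mul, intervalIntegral.integral_const_mul,
        hFTC1, hFTC2]
  have hmain : A ^ 2 / B ≤ ∫ t in (0:ℝ)..s, φ t ^ 2 := by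
    have h1 : 0 ≤ (∫ t in (0:ℝ)..s, φ t ^ 2) - 2 * lam * A + lam ^ 2 * B := by
      rw [← hexpand]; exact hkey
    have h2 : 2 * lam * A - lam ^ 2 * B = A ^ 2 / B := by
      rw [hlam]; field_simp; ring
    linarith
  -- lower bound for A²/B
  have hAsq : Real.exp (2 * γ * s) * δ ^ 2 ≤ A ^ 2 := by
    have h1 : δ ^ 2 ≤ (f s - x s) ^ 2 := by
      nlinarith [hsdev, abs_nonneg (f s - x s), sq_abs (f s - x s)]
    have h2 : A ^ 2 = Real.exp (2 * γ * s) * (f s - x s) ^ 2 := by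
      rw [hA]
      have h : Real.exp (2 * γ * s) = Real.exp (γ * s) * Real.exp (γ * s) := by
        rw [← Real.exp_add]; ring_nf
      rw [h]; ring
    rw [h2]
    have h3 : (0:ℝ) < Real.exp (2 * γ * s) := Real.exp_pos _
    nlinarith
  have hstep1 : 2 * γ * δ ^ 2 * Real.exp (2 * γ * s) / (Real.exp (2 * γ * s) - 1)
      ≤ ∫ t in (0:ℝ)..s, φ t ^ 2 := by
    refine le_trans ?_ hmain
    rw [hB, div_div_eq_mul_div]
    rw [div_le_div_iff₀ (by linarith) (by linarith)]
    have hh := mul_le_mul_of_nonneg_left hAsq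
      (show (0:ℝ) ≤ 2 * γ * (Real.exp (2 * γ * s) - 1) by nlinarith)
    ring_nf at hh ⊢
    linarith
  -- monotonicity in s: coth decreasing
  have hET : 1 < Real.exp (2 * γ * T) := by
    have h := Real.add_one_le_exp (2 * γ * T)
    nlinarith [mul_pos (mul_pos two_pos hγ) hT]
  have hEle : Real.exp (2 * γ * s) ≤ Real.exp (2 * γ * T) :=
    Real.exp_le_exp.mpr (by nlinarith)
  have hmono2 : 2 * γ * δ ^ 2 * Real.exp (2 * γ * T) / (Real.exp (2 * γ * T) - 1)
      ≤ 2 * γ * δ ^ 2 * Real.exp (2 * γ * s) / (Real.exp (2 * γ * s) - 1) := by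
    rw [div_le_div_iff₀ (by linarith) (by linarith)]
    nlinarith [mul_le_mul_of_nonneg_left hEle (by positivity : (0:ℝ) ≤ 2 * γ * δ ^ 2)]
  -- monotonicity of the integral in the interval
  have hmono : ∫ t in (0:ℝ)..s, φ t ^ 2 ≤ ∫ t in (0:ℝ)..T, φ t ^ 2 :=
    intervalIntegral.integral_mono_interval le_rfl hs0 hsT
      (Filter.Eventually.of_forall fun t => sq_nonneg _) hφsq
  -- identification of the constant
  have hsinh : 0 < Real.sinh (γ * T) := Real.sinh_pos_iff.mpr (by positivity)
  have hid : γ * δ ^ 2 / 2 * (1 + Real.cosh (γ * T) / Real.sinh (γ * T))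
      = γ * δ ^ 2 * Real.exp (2 * γ * T) / (Real.exp (2 * γ * T) - 1) := by
    have hE : Real.exp (2 * γ * T) = Real.exp (γ * T) * Real.exp (γ * T) := by
      rw [← Real.exp_add]; ring_nf
    have hE1 : 1 < Real.exp (γ * T) := by
      have h := Real.add_one_le_exp (γ * T)
      nlinarith [mul_pos hγ hT]
    have hEne : Real.exp (γ * T) ≠ 0 := (Real.exp_pos _).ne'
    have hsne : Real.sinh (γ * T) ≠ 0 := hsinh.ne'
    have hd : Real.exp (γ * T) * Real.exp (γ * T) - 1 ≠ 0 := by nlinarith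
    have hinv := mul_inv_cancel₀ hEne
    have hpos : 0 < Real.exp (γ * T) - (Real.exp (γ * T))⁻¹ := by
      nlinarith [inv_pos.mpr (Real.exp_pos (γ * T))]
    have hsne2 : Real.exp (γ * T) - (Real.exp (γ * T))⁻¹ ≠ 0 := hpos.ne'
    rw [Real.cosh_eq, Real.sinh_eq, hE, Real.exp_neg]
    field_simp
    have hd2 : Real.exp (γ * T) ^ 2 - 1 ≠ 0 := by nlinarith
    field_simp
    ring
  rw [hid]
  have : γ * δ ^ 2 * Real.exp (2 * γ * T) / (Real.exp (2 * γ * T) - 1)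
      = (1/2) * (2 * γ * δ ^ 2 * Real.exp (2 * γ * T) / (Real.exp (2 * γ * T) - 1)) := by
    ring
  rw [this]
  have hfin : 2 * γ * δ ^ 2 * Real.exp (2 * γ * T) / (Real.exp (2 * γ * T) - 1)
      ≤ ∫ t in (0:ℝ)..T, φ t ^ 2 := by linarith
  linarith
end

section
/- Let γ > 0, K ∈ ℝ, x0 ∈ ℝ, T > 0, δ > 0, and let x(t) = (x0 − K/γ)·e^{−γt} + K/γ be the solution of x′ = K − γx with x(0) = x0. Then the infimum, over all absolutely continuous f : [0, T] → ℝ with f′ ∈ L²([0, T]), f(0) = x0 and sup_{t ∈ [0,T]} |f(t) − x(t)| ≥ δ, of the action (1/2)·∫₀^T (f′(t) − (K − γ·f(t)))² dt equals exactly (γδ²/2)·(1 + cosh(γT)/sinh(γT)), and it is attained by f(t) = x(t) + δ·sinh(γt)/sinh(γT). -/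
open MeasureTheory

theorem key_id (γ δ u : ℝ) (hu : 0 < u) :
    γ * δ ^ 2 / 2 * (1 + Real.cosh u / Real.sinh u)
      = γ * δ ^ 2 * Real.exp (2*u) / (Real.exp (2*u) - 1) := by
  have hE : (0:ℝ) < Real.exp u := Real.exp_pos u
  have hE1 : 1 < Real.exp u := by
    rw [show (1:ℝ) = Real.exp 0 by simp]; exact Real.exp_lt_exp.2 hu
  have h2 : Real.exp (2*u) = Real.exp u ^ 2 := by
    rw [show 2*u = u + u by ring, Real.exp_add]; ring
  have hSpos : 0 < Real.sinh u := by
    rw [Real.sinh_eq, Real.exp_neg]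
    have : (Real.exp u)⁻¹ < 1 := by rw [inv_lt_one_iff₀]; right; exact hE1
    linarith
  have hS : Real.sinh u ≠ 0 := ne_of_gt hSpos
  have hne : Real.exp u ^ 2 - 1 ≠ 0 := by nlinarith
  have hne' : -1 + Real.exp u ^ 2 ≠ 0 := by intro h; apply hne; linarith
  rw [Real.cosh_eq, Real.sinh_eq, Real.exp_neg, h2]
  rw [Real.sinh_eq, Real.exp_neg] at hS
  have hEne : Real.exp u ≠ 0 := ne_of_gt hE
  field_simp
  ring


theorem mono_aux (c a b : ℝ) (hc : 0 ≤ c) (ha : 1 < a) (hab : a ≤ b) :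
    c * b / (b - 1) ≤ c * a / (a - 1) := by
  rw [div_le_div_iff₀ (by linarith) (by linarith)]
  nlinarith [mul_nonneg hc (sub_nonneg.2 hab)]

theorem final_aux (γ δ E0 v A : ℝ) (hγ : 0 < γ) (hE0 : 1 < E0)
    (hA : A = (E0 - 1) / (2 * γ)) (hv : E0 * δ ^ 2 ≤ v ^ 2) :
    γ * δ ^ 2 * E0 / (E0 - 1) ≤ (1/2) * (v ^ 2 / A) := by
  have h1 : E0 - 1 ≠ 0 := by intro h; linarith
  have hA' : (1/2) * (v^2 / A) = γ * v^2 / (E0 - 1) := by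
    rw [hA]
    field_simp
  rw [hA', div_le_div_iff₀ (by linarith) (by linarith)]
  nlinarith [mul_le_mul_of_nonneg_left hv
    (mul_pos hγ (show (0:ℝ) < E0 - 1 by linarith)).le]


theorem part1_aux (γ K x0 T δ : ℝ) (hγ : 0 < γ) (hT : 0 < T) (hδ : 0 < δ) :
    (∀ f fd : ℝ → ℝ,
      (∀ t ∈ Set.Icc (0 : ℝ) T, HasDerivAt f (fd t) t) →
      IntervalIntegrable (fun t => (fd t) ^ 2) volume 0 T →
      IntervalIntegrable fd volume 0 T →
      f 0 = x0 →
      (∃ t ∈ Set.Icc (0 : ℝ) T,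
        δ ≤ |f t - ((x0 - K / γ) * Real.exp (-γ * t) + K / γ)|) →
      γ * δ ^ 2 / 2 * (1 + Real.cosh (γ * T) / Real.sinh (γ * T)) ≤
        (1 / 2) * ∫ t in (0 : ℝ)..T, (fd t - (K - γ * f t)) ^ 2) := by
  intro f fd hderiv hint2 hint1 hf0 hdev
  obtain ⟨t0, ⟨ht00, ht0T⟩, hdev⟩ := hdev
  have hγ' : γ ≠ 0 := ne_of_gt hγ
  -- t0 > 0
  have ht0pos : 0 < t0 := by
    rcases lt_or_eq_of_le ht00 with h | h
    · exact h
    · exfalso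
      rw [← h] at hdev
      have : (x0 - K / γ) * Real.exp (-γ * 0) + K / γ = x0 := by simp
      rw [this, hf0] at hdev
      simp at hdev
      linarith
  have hsub : Set.uIcc (0:ℝ) t0 ⊆ Set.uIcc (0:ℝ) T := by
    rw [Set.uIcc_of_le ht0pos.le, Set.uIcc_of_le hT.le]
    exact Set.Icc_subset_Icc le_rfl ht0T
  have hsub2 : Set.uIcc t0 T ⊆ Set.uIcc (0:ℝ) T := by
    rw [Set.uIcc_of_le ht0T, Set.uIcc_of_le hT.le]
    exact Set.Icc_subset_Icc ht0pos.le le_rfl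
  have hIccT : Set.uIcc (0:ℝ) T = Set.Icc 0 T := Set.uIcc_of_le hT.le
  have hcontf : ContinuousOn f (Set.uIcc (0:ℝ) T) := by
    rw [hIccT]; exact fun t ht => (hderiv t ht).continuousAt.continuousWithinAt
  have hcontE : Continuous (fun t : ℝ => Real.exp (γ*t)) :=
    Real.continuous_exp.comp (continuous_const.mul continuous_id)
  have hcontE2 : Continuous (fun t : ℝ => Real.exp (2*γ*t)) :=
    Real.continuous_exp.comp (continuous_const.mul continuous_id)
  -- derivative of h
  have hh : ∀ t ∈ Set.Icc (0:ℝ) T, HasDerivAt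
      (fun t => Real.exp (γ*t) * (f t - K/γ) - (x0 - K/γ))
      (Real.exp (γ*t) * (fd t - (K - γ * f t))) t := by
    intro t ht
    have h2 : HasDerivAt (fun t : ℝ => γ * t) γ t := by
      simpa using (hasDerivAt_id t).const_mul γ
    have := (h2.exp.mul ((hderiv t ht).sub_const (K/γ))).sub_const (x0 - K/γ)
    refine this.congr_deriv ?_
    field_simp
    ring
  -- integrability of h'
  have hint_h' : IntervalIntegrable
      (fun t => Real.exp (γ*t) * (fd t - (K - γ * f t))) volume 0 T := by
    have heq : (fun t => Real.exp (γ*t) * (fd t - (K - γ*f t)))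
        = fun t => fd t * Real.exp (γ*t) + (γ * f t - K) * Real.exp (γ*t) :=
      funext fun t => by ring
    rw [heq]
    exact (hint1.mul_continuousOn hcontE.continuousOn).add
      ((((continuousOn_const.mul hcontf).sub continuousOn_const).mul
        hcontE.continuousOn).intervalIntegrable)
  -- integrability of u^2
  have hint_u2 : IntervalIntegrable
      (fun t => (fd t - (K - γ * f t))^2) volume 0 T := by
    have heq : (fun t => (fd t - (K - γ*f t))^2)
        = fun t => (fd t^2 + fd t * (2*γ*f t - 2*K)) + (K - γ*f t)^2 :=
      funext fun t => by ring
    rw [heq]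
    exact ((hint2.add (hint1.mul_continuousOn
        ((continuousOn_const.mul hcontf).sub continuousOn_const))).add
      ((continuousOn_const.sub (continuousOn_const.mul hcontf)).pow 2).intervalIntegrable)
  set E0 := Real.exp (2*γ*t0) with hE0def
  have hE0gt : 1 < E0 := by
    rw [hE0def, show (1:ℝ) = Real.exp 0 by simp]
    exact Real.exp_lt_exp.2 (by positivity)
  set A := (E0 - 1)/(2*γ) with hAdef
  have hApos : 0 < A := by
    apply div_pos (by linarith) (by linarith)
  set hval := Real.exp (γ*t0) * (f t0 - K/γ) - (x0 - K/γ) with hvaldef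
  set c := hval / A with hcdef
  -- FTC for h
  have step1 : ∫ t in (0:ℝ)..t0, Real.exp (γ*t) * (fd t - (K - γ * f t)) = hval := by
    rw [intervalIntegral.integral_eq_sub_of_hasDerivAt
      (fun t ht => hh t (by rw [← hIccT]; exact hsub ht)) (hint_h'.mono_set hsub)]
    simp [hf0, hvaldef]
  -- FTC for exp(2γt)
  have step2 : ∫ t in (0:ℝ)..t0, Real.exp (2*γ*t) = A := by
    have hF : ∀ t ∈ Set.uIcc (0:ℝ) t0, HasDerivAt
        (fun t => Real.exp (2*γ*t)/(2*γ)) (Real.exp (2*γ*t)) t := by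
      intro t _
      have h2 : HasDerivAt (fun t : ℝ => 2*γ * t) (2*γ) t := by
        simpa using (hasDerivAt_id t).const_mul (2*γ)
      have := h2.exp.div_const (2*γ)
      refine this.congr_deriv ?_
      field_simp
    rw [intervalIntegral.integral_eq_sub_of_hasDerivAt hF
      (hcontE2.intervalIntegrable _ _)]
    rw [show 2*γ*0 = (0:ℝ) by ring, Real.exp_zero]
    rw [hAdef]
    ring
  -- pointwise bound and integral comparison
  have hint_lhs : IntervalIntegrable
      (fun t => 2*c*(Real.exp (γ*t) * (fd t - (K - γ * f t))) - c^2 * Real.exp (2*γ*t))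
      volume 0 t0 := by
    exact (((hint_h'.mono_set hsub).const_mul (2*c)).sub
      ((continuous_const.mul hcontE2).intervalIntegrable _ _))
  have step3 : ∫ t in (0:ℝ)..t0,
      (2*c*(Real.exp (γ*t) * (fd t - (K - γ * f t))) - c^2 * Real.exp (2*γ*t))
      ≤ ∫ t in (0:ℝ)..t0, (fd t - (K - γ * f t))^2 := by
    apply intervalIntegral.integral_mono_on ht0pos.le hint_lhs
      (hint_u2.mono_set hsub)
    intro t _
    have he2 : Real.exp (2*γ*t) = Real.exp (γ*t)^2 := by
      rw [show 2*γ*t = γ*t + γ*t by ring, Real.exp_add]; ring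
    nlinarith [sq_nonneg (fd t - (K - γ*f t) - c*Real.exp (γ*t))]
  have step4 : ∫ t in (0:ℝ)..t0,
      (2*c*(Real.exp (γ*t) * (fd t - (K - γ * f t))) - c^2 * Real.exp (2*γ*t))
      = hval^2 / A := by
    rw [intervalIntegral.integral_sub (g := fun t => c^2 * Real.exp (2*γ*t))
        ((hint_h'.mono_set hsub).const_mul (2*c))
        ((continuous_const.mul hcontE2).intervalIntegrable _ _)]
    rw [intervalIntegral.integral_const_mul, step1]
    have : ∫ t in (0:ℝ)..t0, c^2 * Real.exp (2*γ*t)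
        = c^2 * ∫ t in (0:ℝ)..t0, Real.exp (2*γ*t) := by
      rw [intervalIntegral.integral_const_mul]
    rw [this, step2, hcdef]
    have hAne : A ≠ 0 := ne_of_gt hApos
    field_simp
    ring
  -- hval bound
  have hee : Real.exp (γ*t0) * Real.exp (-γ*t0) = 1 := by
    rw [← Real.exp_add]; norm_num
  have hvalx : hval = Real.exp (γ*t0) *
      (f t0 - ((x0 - K / γ) * Real.exp (-γ * t0) + K / γ)) := by
    rw [hvaldef]; linear_combination (x0 - K/γ) * hee
  have hvalsq : E0 * δ^2 ≤ hval^2 := by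
    have h1 : δ^2 ≤ (f t0 - ((x0 - K / γ) * Real.exp (-γ * t0) + K / γ))^2 := by
      rw [← sq_abs (f t0 - ((x0 - K / γ) * Real.exp (-γ * t0) + K / γ))]
      exact pow_le_pow_left₀ hδ.le hdev 2
    have hE0eq : E0 = Real.exp (γ*t0)^2 := by
      rw [hE0def, show 2*γ*t0 = γ*t0 + γ*t0 by ring, Real.exp_add]; ring
    rw [hvalx, mul_pow, hE0eq]
    have := sq_nonneg (Real.exp (γ*t0))
    nlinarith [Real.exp_pos (γ*t0)]
  -- tail
  have tail : ∫ t in (0:ℝ)..t0, (fd t - (K - γ * f t))^2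
      ≤ ∫ t in (0:ℝ)..T, (fd t - (K - γ * f t))^2 := by
    rw [← intervalIntegral.integral_add_adjacent_intervals
      (hint_u2.mono_set hsub) (hint_u2.mono_set hsub2)]
    have : 0 ≤ ∫ t in t0..T, (fd t - (K - γ * f t))^2 :=
      intervalIntegral.integral_nonneg ht0T (fun u _ => sq_nonneg _)
    linarith
  -- final arithmetic
  have hkey := key_id γ δ (γ*T) (mul_pos hγ hT)
  set ET := Real.exp (2*(γ*T)) with hETdef
  have hETgt : 1 < ET := by
    rw [hETdef, show (1:ℝ) = Real.exp 0 by simp]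
    exact Real.exp_lt_exp.2 (by positivity)
  have hE0ET : E0 ≤ ET := by
    rw [hE0def, hETdef]
    exact Real.exp_le_exp.2 (by nlinarith)
  have hmono : γ * δ^2 * ET / (ET - 1) ≤ γ * δ^2 * E0 / (E0 - 1) :=
    mono_aux (γ * δ^2) E0 ET (by positivity) hE0gt hE0ET
  rw [hkey]
  have hfinal : γ * δ^2 * E0 / (E0 - 1) ≤ (1/2) * (hval^2 / A) :=
    final_aux γ δ E0 hval A hγ hE0gt hAdef hvalsq
  calc γ * δ^2 * ET / (ET - 1) ≤ γ * δ^2 * E0 / (E0 - 1) := hmono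
    _ ≤ (1/2) * (hval^2 / A) := hfinal
    _ ≤ (1/2) * ∫ t in (0:ℝ)..T, (fd t - (K - γ * f t))^2 := by
        have := le_trans (step4 ▸ step3) tail
        linarith


theorem part2_aux (γ K x0 T δ : ℝ) (hγ : 0 < γ) (hT : 0 < T) (hδ : 0 < δ) :
    (∀ fstar : ℝ → ℝ,
      fstar = (fun t =>
        ((x0 - K / γ) * Real.exp (-γ * t) + K / γ) +
          δ * Real.sinh (γ * t) / Real.sinh (γ * T)) →
      fstar 0 = x0 ∧
      (∃ t ∈ Set.Icc (0 : ℝ) T,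
        δ ≤ |fstar t - ((x0 - K / γ) * Real.exp (-γ * t) + K / γ)|) ∧
      (1 / 2) * (∫ t in (0 : ℝ)..T, (deriv fstar t - (K - γ * fstar t)) ^ 2) =
        γ * δ ^ 2 / 2 * (1 + Real.cosh (γ * T) / Real.sinh (γ * T))) := by
  intro fstar hfstar
  subst hfstar
  have hu : 0 < γ * T := mul_pos hγ hT
  have hSpos : 0 < Real.sinh (γ * T) := by
    rw [Real.sinh_eq, Real.exp_neg]
    have hE1 : 1 < Real.exp (γ*T) := by
      rw [show (1:ℝ) = Real.exp 0 by simp]; exact Real.exp_lt_exp.2 hu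
    have : (Real.exp (γ*T))⁻¹ < 1 := by rw [inv_lt_one_iff₀]; right; exact hE1
    linarith
  have hS := ne_of_gt hSpos
  set S := Real.sinh (γ * T) with hSdef
  refine ⟨by simp, ⟨T, ⟨le_of_lt hT, le_refl T⟩, by
      rw [show ((x0 - K / γ) * Real.exp (-γ * T) + K / γ) +
          δ * Real.sinh (γ * T) / S - ((x0 - K / γ) * Real.exp (-γ * T) + K / γ)
          = δ * (S / S) by ring]
      rw [div_self hS, mul_one, abs_of_pos hδ]⟩, ?_⟩
  -- derivative computation
  have hderiv : ∀ t : ℝ, HasDerivAt (fun t =>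
        ((x0 - K / γ) * Real.exp (-γ * t) + K / γ) +
          δ * Real.sinh (γ * t) / S)
      ((x0 - K/γ) * (Real.exp (-γ*t) * (-γ)) + δ * (γ * Real.cosh (γ*t)) / S) t := by
    intro t
    have h1 : HasDerivAt (fun t : ℝ => -γ * t) (-γ) t := by
      simpa using (hasDerivAt_id t).const_mul (-γ)
    have h2 : HasDerivAt (fun t : ℝ => γ * t) γ t := by
      simpa using (hasDerivAt_id t).const_mul γ
    have hexp : HasDerivAt (fun t : ℝ => Real.exp (-γ * t)) (Real.exp (-γ*t) * (-γ)) t := h1.exp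
    have hsinh : HasDerivAt (fun t : ℝ => Real.sinh (γ * t)) (Real.cosh (γ*t) * γ) t := h2.sinh
    have := ((hexp.const_mul (x0 - K/γ)).add_const (K/γ)).add
      (((hsinh.const_mul δ).div_const S))
    refine this.congr_deriv ?_
    ring
  have hint : ∀ t : ℝ,
      deriv (fun t => ((x0 - K / γ) * Real.exp (-γ * t) + K / γ) +
          δ * Real.sinh (γ * t) / S) t
        - (K - γ * (((x0 - K / γ) * Real.exp (-γ * t) + K / γ) +
          δ * Real.sinh (γ * t) / S))
      = δ * γ * Real.exp (γ * t) / S := by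
    intro t
    rw [(hderiv t).deriv]
    have hγ' : γ ≠ 0 := ne_of_gt hγ
    field_simp
    linear_combination (γ*δ) * Real.cosh_add_sinh (γ*t)
  rw [intervalIntegral.integral_congr (fun t _ => by rw [hint t])]
  have hF : ∀ t ∈ Set.uIcc (0:ℝ) T, HasDerivAt
      (fun t => δ^2 * γ * Real.exp (2*γ*t) / (2 * S^2))
      ((δ * γ * Real.exp (γ * t) / S)^2) t := by
    intro t _
    have h2 : HasDerivAt (fun t : ℝ => 2*γ * t) (2*γ) t := by
      simpa using (hasDerivAt_id t).const_mul (2*γ)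
    have := ((h2.exp.const_mul (δ^2*γ)).div_const (2*S^2))
    refine this.congr_deriv ?_
    have : Real.exp (2*γ*t) = Real.exp (γ*t)^2 := by
      rw [show 2*γ*t = γ*t + γ*t by ring, Real.exp_add]; ring
    rw [this]; field_simp
  have hcont : IntervalIntegrable (fun t => (δ * γ * Real.exp (γ * t) / S)^2) volume 0 T := by
    apply ContinuousOn.intervalIntegrable
    fun_prop
  rw [intervalIntegral.integral_eq_sub_of_hasDerivAt hF hcont]
  have hcsq : Real.cosh (γ*T)^2 = S^2 + 1 := Real.cosh_sq (γ*T)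
  have h2T : Real.exp (2*γ*T) = (Real.cosh (γ*T) + S)^2 := by
    rw [show 2*γ*T = γ*T + γ*T by ring, Real.exp_add, ← Real.cosh_add_sinh (γ*T)]; ring
  rw [h2T, show 2*γ*0 = (0:ℝ) by ring, Real.exp_zero]
  field_simp
  linear_combination hcsq


/-- The infimum of the Freidlin–Wentzell action
`(1/2) ∫₀ᵀ (f' - (K - γ f))²` over absolutely continuous paths `f` on `[0, T]` with
square-integrable derivative, `f(0) = x₀` and sup-norm deviation at least `δ` from the
deterministic solution `x(t) = (x₀ - K/γ) e^{-γ t} + K/γ`, equals exactly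
`(γ δ²/2)(1 + cosh(γ T)/sinh(γ T))`, and it is attained by
`f(t) = x(t) + δ sinh(γ t)/sinh(γ T)`. -/
theorem action_infimum_attained (γ K x0 T δ : ℝ)
    (hγ : 0 < γ) (hT : 0 < T) (hδ : 0 < δ) :
    (∀ f fd : ℝ → ℝ,
      (∀ t ∈ Set.Icc (0 : ℝ) T, HasDerivAt f (fd t) t) →
      IntervalIntegrable (fun t => (fd t) ^ 2) volume 0 T →
      IntervalIntegrable fd volume 0 T →
      f 0 = x0 →
      (∃ t ∈ Set.Icc (0 : ℝ) T,
        δ ≤ |f t - ((x0 - K / γ) * Real.exp (-γ * t) + K / γ)|) →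
      γ * δ ^ 2 / 2 * (1 + Real.cosh (γ * T) / Real.sinh (γ * T)) ≤
        (1 / 2) * ∫ t in (0 : ℝ)..T, (fd t - (K - γ * f t)) ^ 2) ∧
    (∀ fstar : ℝ → ℝ,
      fstar = (fun t =>
        ((x0 - K / γ) * Real.exp (-γ * t) + K / γ) +
          δ * Real.sinh (γ * t) / Real.sinh (γ * T)) →
      fstar 0 = x0 ∧
      (∃ t ∈ Set.Icc (0 : ℝ) T,
        δ ≤ |fstar t - ((x0 - K / γ) * Real.exp (-γ * t) + K / γ)|) ∧
      (1 / 2) * (∫ t in (0 : ℝ)..T, (deriv fstar t - (K - γ * fstar t)) ^ 2) =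
        γ * δ ^ 2 / 2 * (1 + Real.cosh (γ * T) / Real.sinh (γ * T))) :=
  ⟨part1_aux γ K x0 T δ hγ hT hδ, part2_aux γ K x0 T δ hγ hT hδ⟩
end
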